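/- Let k, n be integers with k < 0 and n ≥ k(2k−1), and set m = −2k. Then the number of strict partitions of n with exactly m parts and BG-rank equal to k equals the number of partitions λ with largest part at most −2k and 2|λ| = n − k(2k−1). -/

import Mathlib

/-!
With `m = 2t` parts the BG-rank is at least `-t`, with equality exactly when
`λᵢ ≡ m + 1 - i (mod 2)` for all `i`. Consecutive parts then differ by an odd amount, so
`λᵢ = (m + 1 - i) + 2 eᵢ` with `e₁ ≥ ⋯ ≥ eₘ ≥ 0` and `|λ| = t(2t + 1) + 2|e|`. Conjugating `e`
gives a partition with parts at most `m` and size `|e|`, and this is a bijection.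
-/

/-- The `i`-th entry (1-indexed) of a list of naturals, defaulting to `0`. -/
def entry (d : List ℕ) (i : ℕ) : ℕ := d.getD (i - 1) 0

/-- The alternating partial sum `∑_{i=1}^{m} (−1)^i d_i` of a list `d`. -/
def altSum (d : List ℕ) (m : ℕ) : ℤ :=
  ∑ i ∈ Finset.Icc 1 m, (-1 : ℤ) ^ i * (entry d i : ℤ)

/-- `d = (d_1, …, d_l)` is an `(a,b)`-sequence: it is a list of positive integers with
`l ≥ b ≥ 1`, `d_i = a + i` for `1 ≤ i ≤ b`, `d_b ≥ d_{b+1} ≥ ⋯ ≥ d_l ≥ 1`, and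
`∑_{i=1}^{l} (−1)^i d_i = 0`. -/
def IsABSeq (a b : ℕ) (d : List ℕ) : Prop :=
  1 ≤ b ∧ b ≤ d.length ∧
  (∀ i, 1 ≤ i → i ≤ d.length → 1 ≤ entry d i) ∧
  (∀ i, 1 ≤ i → i ≤ b → entry d i = a + i) ∧
  (∀ i j, b ≤ i → i ≤ j → j ≤ d.length → entry d j ≤ entry d i) ∧
  altSum d d.length = 0

/-- An (ordinary) partition, recorded as a weakly decreasing list of positive parts. -/
def IsPartitionList (L : List ℕ) : Prop :=
  L.Pairwise (· ≥ ·) ∧ ∀ x ∈ L, 0 < x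

/-- A strict partition: a strictly decreasing list of positive parts. -/
def IsStrictPartition (L : List ℕ) : Prop :=
  L.Pairwise (· > ·) ∧ ∀ x ∈ L, 0 < x

/-- The column sequence of the shifted Young diagram of a strict partition `L`:
`colSeq L j = #{ i : 1 ≤ i ≤ m, i ≤ j ≤ λ_i + i − 1 }`. -/
def colSeq (L : List ℕ) (j : ℕ) : ℕ :=
  ((Finset.Icc 1 L.length).filter (fun i => i ≤ j ∧ j ≤ entry L i + i - 1)).card

/-- The BG-rank of a partition: the number of odd-indexed odd parts minus
the number of even-indexed odd parts (indices starting at 1). -/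
def bgRank (L : List ℕ) : ℤ :=
  (((Finset.Icc 1 L.length).filter (fun i => Odd i ∧ Odd (entry L i))).card : ℤ) -
  (((Finset.Icc 1 L.length).filter (fun i => Even i ∧ Odd (entry L i))).card : ℤ)

/-- `qj j n`: the number of strict partitions of `n` whose BG-rank equals `j`. -/
noncomputable def qj (j : ℤ) (n : ℕ) : ℕ :=
  Set.ncard {L : List ℕ | IsStrictPartition L ∧ L.sum = n ∧ bgRank L = j}

/-- `countGe μ i` is the `i`-th part of the conjugate of the partition `μ`. -/
def countGe (μ : List ℕ) (i : ℕ) : ℕ := μ.countP (i ≤ ·)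

lemma countGe_anti (μ : List ℕ) {i j : ℕ} (h : i ≤ j) : countGe μ j ≤ countGe μ i :=
  List.countP_mono_left fun x _ hx => by simp only [decide_eq_true_eq] at hx ⊢; omega

lemma countGe_eq_count_add (μ : List ℕ) (v : ℕ) :
    countGe μ v = μ.count v + countGe μ (v + 1) := by
  induction μ with
  | nil => simp [countGe]
  | cons a l ih =>
    simp only [countGe, List.countP_cons, List.count_cons, beq_iff_eq] at *
    split_ifs <;> simp_all <;> omega

lemma countGe_eq_zero {μ : List ℕ} {m i : ℕ} (hμ : ∀ x ∈ μ, x ≤ m) (h : m < i) :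
    countGe μ i = 0 :=
  List.countP_eq_zero.2 fun x hx => by have := hμ x hx; simp only [decide_eq_true_eq]; omega

lemma sum_countGe {m : ℕ} {μ : List ℕ} (hμ : ∀ x ∈ μ, x ≤ m) :
    ∑ i ∈ Finset.range m, countGe μ (i + 1) = μ.sum := by
  induction μ with
  | nil => simp [countGe]
  | cons a l ih =>
    have ha : a ≤ m := hμ a List.mem_cons_self
    simp only [countGe, List.countP_cons, decide_eq_true_eq, List.sum_cons] at ih ⊢
    rw [Finset.sum_add_distrib, ih fun x hx => hμ x (List.mem_cons_of_mem a hx),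
      ← Finset.card_filter, show (Finset.range m).filter (· + 1 ≤ a) = Finset.range a by
        ext x; simp only [Finset.mem_filter, Finset.mem_range]; omega, Finset.card_range,
      add_comm]

lemma eq_of_countGe_eq {μ μ' : List ℕ} (h : IsPartitionList μ) (h' : IsPartitionList μ')
    (hc : ∀ i, 1 ≤ i → countGe μ i = countGe μ' i) : μ = μ' := by
  refine List.Perm.eq_of_pairwise' h.1 h'.1 (List.perm_iff_count.2 fun v => ?_)
  rcases Nat.eq_zero_or_pos v with rfl | hv
  · rw [List.count_eq_zero.2 fun h0 => (h.2 0 h0).ne rfl,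
      List.count_eq_zero.2 fun h0 => (h'.2 0 h0).ne rfl]
  · have := countGe_eq_count_add μ v
    have := countGe_eq_count_add μ' v
    have := hc v hv
    have := hc (v + 1) (by omega)
    omega

lemma countP_range_lt (D N : ℕ) : (List.range D).countP (· < N) = min N D := by
  induction D with
  | zero => simp
  | succ D ih =>
    rw [List.range_succ, List.countP_append, ih]
    by_cases h : D < N <;> simp [h] <;> omega

/-- The partition is the conjugate `c j = #{i ≤ m | j ≤ e i}`, `1 ≤ j ≤ e₁`; the Galois
connection `i ≤ c j ↔ j ≤ e i` computes its own conjugate. -/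
lemma exists_countGe_eq {m : ℕ} (hm : 1 ≤ m) {e : ℕ → ℕ}
    (he : ∀ i j, 1 ≤ i → i ≤ j → j ≤ m → e j ≤ e i) :
    ∃ μ : List ℕ, IsPartitionList μ ∧ (∀ x ∈ μ, x ≤ m) ∧
      ∀ i, 1 ≤ i → i ≤ m → countGe μ i = e i := by
  set c : ℕ → ℕ := fun j => ((Finset.Icc 1 m).filter (j ≤ e ·)).card
  have hgal : ∀ i j, 1 ≤ i → i ≤ m → (i ≤ c j ↔ j ≤ e i) := by
    intro i j hi him
    constructor
    · intro hic
      by_contra! hlt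
      have hsub : (Finset.Icc 1 m).filter (j ≤ e ·) ⊆ Finset.Icc 1 (i - 1) := by
        intro i' hi'
        simp only [Finset.mem_filter, Finset.mem_Icc] at hi' ⊢
        by_contra
        have := he i i' hi (by omega) hi'.1.2
        omega
      have : c j ≤ i - 1 := by simpa using Finset.card_le_card hsub
      omega
    · intro hje
      have hsub : Finset.Icc 1 i ⊆ (Finset.Icc 1 m).filter (j ≤ e ·) := by
        intro i' hi'
        simp only [Finset.mem_filter, Finset.mem_Icc] at hi' ⊢
        have := he i' i hi'.1 hi'.2 him
        exact ⟨by omega, by omega⟩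
      simpa using Finset.card_le_card hsub
  refine ⟨(List.range (e 1)).map (fun j => c (j + 1)), ⟨?_, ?_⟩, ?_, ?_⟩
  · rw [List.pairwise_map]
    refine List.pairwise_lt_range.imp fun {a b} hab => Finset.card_le_card fun x hx => ?_
    simp only [Finset.mem_filter] at hx ⊢
    exact ⟨hx.1, by omega⟩
  · simp only [List.mem_map, List.mem_range]
    rintro _ ⟨j, hj, rfl⟩
    have := (hgal 1 (j + 1) le_rfl hm).2 (by omega)
    omega
  · simp only [List.mem_map, List.mem_range]
    rintro _ ⟨j, -, rfl⟩
    simpa using Finset.card_filter_le (Finset.Icc 1 m) _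
  · intro i hi him
    rw [countGe, List.countP_map]
    have hcomp : ∀ j ∈ List.range (e 1),
        ((fun x => decide (i ≤ x)) ∘ fun j => c (j + 1)) j = decide (j < e i) := by
      intro j _
      simp only [Function.comp_apply, decide_eq_decide]
      rw [hgal i (j + 1) hi him]
      omega
    rw [List.countP_congr (fun j hj => by rw [hcomp j hj]), countP_range_lt]
    have := he 1 i le_rfl hi him
    omega

lemma entry_eq_getElem {L : List ℕ} {i : ℕ} (h1 : 1 ≤ i) (h2 : i ≤ L.length) :
    entry L i = L[i - 1] :=
  List.getD_eq_getElem L 0 (by omega)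

lemma ext_entry {L L' : List ℕ} (hlen : L.length = L'.length)
    (h : ∀ i, 1 ≤ i → i ≤ L.length → entry L i = entry L' i) : L = L' := by
  refine List.ext_getElem hlen fun i hi hi' => ?_
  have := h (i + 1) (by omega) (by omega)
  rwa [entry_eq_getElem (by omega) (by omega), entry_eq_getElem (by omega) (by omega)] at this

lemma entry_add_sub_le {L : List ℕ} (hL : L.Pairwise (· > ·)) {i j : ℕ} (hi : 1 ≤ i)
    (hij : i ≤ j) (hj : j ≤ L.length) : entry L j + (j - i) ≤ entry L i := by
  induction j, hij using Nat.le_induction with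
  | base => omega
  | succ j hij ih =>
    have hlt : entry L (j + 1) < entry L j := by
      rw [entry_eq_getElem (by omega) hj, entry_eq_getElem (by omega) (by omega)]
      exact List.pairwise_iff_getElem.1 hL _ _ _ _ (by omega)
    have := ih (by omega)
    omega

def strictOfPartition (m : ℕ) (μ : List ℕ) : List ℕ :=
  List.ofFn fun i : Fin m => (m - i) + 2 * countGe μ (i + 1)

lemma length_strictOfPartition (m : ℕ) (μ : List ℕ) : (strictOfPartition m μ).length = m := by
  simp [strictOfPartition]

lemma entry_strictOfPartition {m : ℕ} (μ : List ℕ) {i : ℕ} (h1 : 1 ≤ i) (h2 : i ≤ m) :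
    entry (strictOfPartition m μ) i = (m + 1 - i) + 2 * countGe μ i := by
  rw [entry_eq_getElem h1 (by rwa [length_strictOfPartition])]
  simp only [strictOfPartition, List.getElem_ofFn, show i - 1 + 1 = i by omega]
  omega

lemma isStrictPartition_strictOfPartition (m : ℕ) (μ : List ℕ) :
    IsStrictPartition (strictOfPartition m μ) := by
  refine ⟨List.pairwise_ofFn.2 fun i j hij => ?_, fun x hx => ?_⟩
  · have := countGe_anti μ (show (i : ℕ) + 1 ≤ j + 1 by omega)
    have := j.2
    show (m - j) + 2 * countGe μ (j + 1) < (m - i) + 2 * countGe μ (i + 1)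
    omega
  · obtain ⟨i, rfl⟩ := List.mem_ofFn.1 hx
    have := i.2
    omega

lemma sum_strictOfPartition {m : ℕ} {μ : List ℕ} (hμ : ∀ x ∈ μ, x ≤ m) :
    2 * (strictOfPartition m μ).sum = m * (m + 1) + 4 * μ.sum := by
  rw [strictOfPartition, List.sum_ofFn,
    Fin.sum_univ_eq_sum_range (fun i => (m - i) + 2 * countGe μ (i + 1)), Finset.sum_add_distrib,
    ← Finset.mul_sum, sum_countGe hμ]
  have hstair : ∑ i ∈ Finset.range m, (m - i) = ∑ i ∈ Finset.range (m + 1), i := by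
    rw [Finset.sum_range_succ', ← Finset.sum_range_reflect, add_zero]
    exact Finset.sum_congr rfl fun i hi => by simp only [Finset.mem_range] at hi; omega
  have := Finset.sum_range_id_mul_two (m + 1)
  simp only [Nat.add_sub_cancel] at this
  rw [hstair]
  linarith

lemma card_filter_even_Icc (t : ℕ) : ((Finset.Icc 1 (2 * t)).filter Even).card = t := by
  have := Nat.Ioc_filter_dvd_card_eq_div (2 * t) 2
  simp only [← even_iff_two_dvd] at this
  rwa [← Finset.Icc_succ_left_eq_Ioc, Nat.mul_div_cancel_left _ two_pos] at this

/-- A list of length `2t` has BG-rank at least `-t`, with equality only for this parity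
pattern. -/
lemma bgRank_eq_neg_iff {L : List ℕ} {t : ℕ} (hL : L.length = 2 * t) :
    bgRank L = -t ↔ ∀ i ∈ Finset.Icc 1 (2 * t), (Odd (entry L i) ↔ Even i) := by
  rw [bgRank, hL]
  set s := Finset.Icc 1 (2 * t)
  have hsub : s.filter (fun i => Even i ∧ Odd (entry L i)) ⊆ s.filter Even :=
    Finset.monotone_filter_right s fun _ _ h => h.1
  constructor
  · intro h i hi
    have hB := Finset.card_le_card hsub
    rw [card_filter_even_Icc] at hB
    have hA : s.filter (fun i => Odd i ∧ Odd (entry L i)) = ∅ := by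
      rw [← Finset.card_eq_zero]; omega
    have hB : s.filter (fun i => Even i ∧ Odd (entry L i)) = s.filter Even :=
      Finset.eq_of_subset_of_card_le hsub (by rw [card_filter_even_Icc]; omega)
    constructor
    · intro hodd
      by_contra heven
      have : i ∈ s.filter (fun i => Odd i ∧ Odd (entry L i)) :=
        Finset.mem_filter.2 ⟨hi, Nat.not_even_iff_odd.1 heven, hodd⟩
      simp [hA] at this
    · intro heven
      have : i ∈ s.filter (fun i => Even i ∧ Odd (entry L i)) :=
        hB ▸ Finset.mem_filter.2 ⟨hi, heven⟩
      exact (Finset.mem_filter.1 this).2.2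
  · intro h
    rw [Finset.filter_false_of_mem fun i hi ⟨hodd, he⟩ =>
        Nat.not_even_iff_odd.2 hodd ((h i hi).1 he),
      Finset.filter_congr fun i hi => and_iff_left_of_imp (h i hi).2, card_filter_even_Icc]
    simp

lemma exists_strictOfPartition_eq {m : ℕ} (hm : 1 ≤ m) {L : List ℕ} (hL : IsStrictPartition L)
    (hlen : L.length = m) (hpar : ∀ i, 1 ≤ i → i ≤ m → entry L i % 2 = (m + 1 - i) % 2) :
    ∃ μ, IsPartitionList μ ∧ (∀ x ∈ μ, x ≤ m) ∧ strictOfPartition m μ = L := by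
  have hgap : ∀ i j, 1 ≤ i → i ≤ j → j ≤ m → entry L j + (j - i) ≤ entry L i :=
    fun i j hi hij hj => entry_add_sub_le hL.1 hi hij (hlen ▸ hj)
  have hlast : 1 ≤ entry L m := by
    rw [entry_eq_getElem hm hlen.ge]
    exact hL.2 _ (List.getElem_mem _)
  obtain ⟨e, hdecomp⟩ : ∃ e : ℕ → ℕ, ∀ i, 1 ≤ i → i ≤ m → entry L i = (m + 1 - i) + 2 * e i :=
    ⟨fun i => (entry L i - (m + 1 - i)) / 2, fun i hi him => by
      have := hgap i m hi him le_rfl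
      have := hpar i hi him
      beta_reduce
      omega⟩
  obtain ⟨μ, hμ, hμm, hcount⟩ := exists_countGe_eq hm (e := e) fun i j hi hij hj => by
    have := hgap i j hi hij hj
    have := hdecomp i hi (by omega)
    have := hdecomp j (by omega) hj
    omega
  refine ⟨μ, hμ, hμm, ext_entry (by rw [length_strictOfPartition, hlen]) fun i hi him => ?_⟩
  rw [length_strictOfPartition] at him
  rw [entry_strictOfPartition μ hi him, hcount i hi him, ← hdecomp i hi him]

lemma strictOfPartition_injOn (m : ℕ) :
    Set.InjOn (strictOfPartition m) {μ | IsPartitionList μ ∧ ∀ x ∈ μ, x ≤ m} := by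
  rintro μ ⟨hμ, hμm⟩ μ' ⟨hμ', hμ'm⟩ heq
  refine eq_of_countGe_eq hμ hμ' fun i hi => ?_
  rcases le_or_gt i m with him | him
  · have := entry_strictOfPartition μ hi him
    rw [heq, entry_strictOfPartition μ' hi him] at this
    omega
  · rw [countGe_eq_zero hμm him, countGe_eq_zero hμ'm him]

lemma image_strictOfPartition {t : ℕ} (ht : 1 ≤ t) (n : ℕ) :
    strictOfPartition (2 * t) ''
        {μ | IsPartitionList μ ∧ (∀ x ∈ μ, x ≤ 2 * t) ∧ 2 * μ.sum + t * (2 * t + 1) = n} =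
      {L | IsStrictPartition L ∧ L.length = 2 * t ∧ L.sum = n ∧ bgRank L = -t} := by
  ext L
  constructor
  · rintro ⟨μ, ⟨hμ, hμm, hsum⟩, rfl⟩
    refine ⟨isStrictPartition_strictOfPartition _ μ, length_strictOfPartition _ μ, ?_,
      (bgRank_eq_neg_iff (length_strictOfPartition _ μ)).2 fun i hi => ?_⟩
    · have := sum_strictOfPartition hμm
      linarith
    · rw [Finset.mem_Icc] at hi
      rw [entry_strictOfPartition μ hi.1 hi.2, Nat.odd_iff, Nat.even_iff]
      omega
  · rintro ⟨hL, hlen, hsum, hbg⟩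
    have hpar := (bgRank_eq_neg_iff hlen).1 hbg
    obtain ⟨μ, hμ, hμm, rfl⟩ := exists_strictOfPartition_eq (by omega) hL hlen fun i hi him => by
      have := hpar i (Finset.mem_Icc.2 ⟨hi, him⟩)
      rw [Nat.odd_iff, Nat.even_iff] at this
      omega
    refine ⟨μ, ⟨hμ, hμm, ?_⟩, rfl⟩
    have := sum_strictOfPartition hμm
    linarith

theorem ncard_strictPartition_bgRank_eq_neg {t : ℕ} (ht : 1 ≤ t) (n : ℕ) :
    Set.ncard {L | IsStrictPartition L ∧ L.length = 2 * t ∧ L.sum = n ∧ bgRank L = -t} =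
      Set.ncard
        {μ | IsPartitionList μ ∧ (∀ x ∈ μ, x ≤ 2 * t) ∧ 2 * μ.sum + t * (2 * t + 1) = n} := by
  rw [← image_strictOfPartition ht n]
  refine Set.InjOn.ncard_image ((strictOfPartition_injOn _).mono ?_)
  exact fun _ hμ => ⟨hμ.1, hμ.2.1⟩

theorem strict_bg_count_case4_general (k : ℤ) (n : ℕ) (hk : k < 0) :
    Set.ncard {L : List ℕ | IsStrictPartition L ∧ L.length = (-2 * k).toNat ∧ L.sum = n ∧
      bgRank L = k} =
    Set.ncard {μ : List ℕ | IsPartitionList μ ∧ (∀ x ∈ μ, (x : ℤ) ≤ -2 * k) ∧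
      2 * (μ.sum : ℤ) = (n : ℤ) - k * (2 * k - 1)} := by
  obtain ⟨t, rfl⟩ : ∃ t : ℕ, k = -t := ⟨(-k).toNat, by omega⟩
  have hlen : (-2 * -(t : ℤ)).toNat = 2 * t := by omega
  have hquad : -(t : ℤ) * (2 * -(t : ℤ) - 1) = ((t * (2 * t + 1) : ℕ) : ℤ) := by
    push_cast; ring
  rw [hlen, ncard_strictPartition_bgRank_eq_neg (by omega) n, hquad]
  congr 1
  ext μ
  refine and_congr_right fun _ => and_congr (forall₂_congr fun x _ => ?_) ?_ <;> omega

/-- Theorem 3.4(4): for `k < 0`, `n ≥ k(2k−1)`, and `m = −2k`, the number of strict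
partitions of `n` with exactly `m` parts and BG-rank `k` equals the number of partitions
with largest part at most `−2k` and `2|λ| = n − k(2k−1)`. -/
theorem strict_bg_count_case4 (k : ℤ) (n : ℕ) (hk : k < 0) (hn : k * (2 * k - 1) ≤ (n : ℤ)) :
    Set.ncard {L : List ℕ | IsStrictPartition L ∧ L.length = (-2 * k).toNat ∧ L.sum = n ∧
      bgRank L = k} =
    Set.ncard {μ : List ℕ | IsPartitionList μ ∧ (∀ x ∈ μ, (x : ℤ) ≤ -2 * k) ∧
      2 * (μ.sum : ℤ) = (n : ℤ) - k * (2 * k - 1)} :=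
  strict_bg_count_case4_general k n hk
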